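/- Let n ≥ 2. In D_{2n} = ⟨a, s : a^{2n} = s^2 = (as)^2 = 1⟩, the tuple (s, s, as, a^3 s, a^2) is a generating vector of type (0; 2,2,2,2,n): the five elements generate D_{2n}, the first four have order 2, the fifth has order n, and their product is the identity. -/

import Mathlib

open DihedralGroup

namespace DihedralGroup

variable {m : ℕ}

theorem orderOf_r_mul_sr (i j : ZMod m) : orderOf (r i * sr j) = 2 := by
  rw [r_mul_sr]
  exact orderOf_sr _

theorem orderOf_r_one_pow_of_dvd {d : ℕ} (hd : d ≠ 0) (hdm : d ∣ m) :
    orderOf ((r 1 : DihedralGroup m) ^ d) = m / d := by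
  rw [orderOf_pow_of_dvd hd (orderOf_r_one ▸ hdm), orderOf_r_one]

theorem closure_sr_zero_r_one_mul_sr_zero :
    Subgroup.closure ({sr 0, r 1 * sr 0} : Set (DihedralGroup m)) = ⊤ := by
  set H := Subgroup.closure ({sr 0, r 1 * sr 0} : Set (DihedralGroup m))
  have hs : sr 0 ∈ H := Subgroup.subset_closure (by simp)
  have hr : ∀ i : ZMod m, r i ∈ H := by
    have hr1 : r 1 ∈ H := by
      have := mul_mem (Subgroup.subset_closure (by simp) : r 1 * sr 0 ∈ H) hs
      rwa [mul_assoc, sr_mul_self, mul_one] at this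
    intro i
    simpa [r_one_zpow] using zpow_mem hr1 i.cast
  refine eq_top_iff.2 fun x _ ↦ ?_
  cases x with
  | r i => exact hr i
  | sr i => simpa [sr_mul_r] using mul_mem hs (hr i)

end DihedralGroup

theorem stmt_8_general (n : ℕ) :
    orderOf (sr 0 : DihedralGroup (2 * n)) = 2 ∧
    orderOf ((r 1 : DihedralGroup (2 * n)) * sr 0) = 2 ∧
    orderOf ((r 1 : DihedralGroup (2 * n)) ^ 3 * sr 0) = 2 ∧
    orderOf ((r 1 : DihedralGroup (2 * n)) ^ 2) = n ∧
    (sr 0 : DihedralGroup (2 * n)) * sr 0 * (r 1 * sr 0) * ((r 1) ^ 3 * sr 0) *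
        (r 1) ^ 2 = 1 ∧
    Subgroup.closure
        ({(sr 0 : DihedralGroup (2 * n)), r 1 * sr 0, (r 1) ^ 3 * sr 0, (r 1) ^ 2} :
          Set (DihedralGroup (2 * n))) = ⊤ := by
  refine ⟨orderOf_sr 0, orderOf_r_mul_sr 1 0, ?_, ?_, ?_, ?_⟩
  · rw [r_one_pow]
    exact orderOf_r_mul_sr _ _
  · rw [orderOf_r_one_pow_of_dvd two_ne_zero (dvd_mul_right 2 n)]
    omega
  · simp only [r_one_pow, r_mul_sr, sr_mul_sr, r_mul_r, one_def]
    congr 1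
    push_cast
    ring
  · refine eq_top_iff.2 (closure_sr_zero_r_one_mul_sr_zero.ge.trans (Subgroup.closure_mono ?_))
    exact Set.insert_subset_insert (Set.singleton_subset_iff.2 (Set.mem_insert _ _))

/-- For `n ≥ 2`, the tuple `(s, s, as, a^3 s, a^2)` is a generating vector of
`D_{2n}` of type `(0; 2,2,2,2,n)`. -/
theorem stmt_8 (n : ℕ) (hn : 2 ≤ n) :
    orderOf (sr 0 : DihedralGroup (2 * n)) = 2 ∧
    orderOf ((r 1 : DihedralGroup (2 * n)) * sr 0) = 2 ∧
    orderOf ((r 1 : DihedralGroup (2 * n)) ^ 3 * sr 0) = 2 ∧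
    orderOf ((r 1 : DihedralGroup (2 * n)) ^ 2) = n ∧
    (sr 0 : DihedralGroup (2 * n)) * sr 0 * (r 1 * sr 0) * ((r 1) ^ 3 * sr 0) *
        (r 1) ^ 2 = 1 ∧
    Subgroup.closure
        ({(sr 0 : DihedralGroup (2 * n)), r 1 * sr 0, (r 1) ^ 3 * sr 0, (r 1) ^ 2} :
          Set (DihedralGroup (2 * n))) = ⊤ :=
  stmt_8_general n
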